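/- Let D be a divisor on a finite connected simple graph G with deg(D) ≤ g − 1. Then r(D) = −1 if and only if there exist a divisor D' and an acyclic partial orientation O of G such that D ~ D' and D' ≤ D_O pointwise. -/

import Mathlib

/-- A partial orientation of a simple graph `G`: each edge of some subset of the
edges of `G` is given a direction; `dir u v = true` means the edge `{u,v}` is
oriented from `u` towards `v`. -/
structure PartialOrientation {V : Type*} (G : SimpleGraph V) where
  dir : V → V → Bool
  adj_of_dir : ∀ u v, dir u v = true → G.Adj u v
  not_both : ∀ u v, dir u v = true → dir v u = false

namespace PartialOrientation

variable {V : Type*} {G : SimpleGraph V}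

/-- The indegree of a vertex in a partial orientation. -/
def indeg [Fintype V] (O : PartialOrientation G) (v : V) : ℕ :=
  (Finset.univ.filter (fun u => O.dir u v = true)).card

/-- The divisor associated to a partial orientation: `D_O(v) = indeg(v) - 1`. -/
def div [Fintype V] (O : PartialOrientation G) (v : V) : ℤ :=
  (O.indeg v : ℤ) - 1

/-- A partial orientation is acyclic if it has no directed cycle (equivalently,
no vertex reaches itself by a nonempty directed walk). -/
def Acyclic (O : PartialOrientation G) : Prop :=
  ∀ v, ¬ Relation.TransGen (fun a b => O.dir a b = true) v v

/-- A partial orientation is sourceless if every vertex has an incoming oriented edge. -/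
def Sourceless (O : PartialOrientation G) : Prop :=
  ∀ v, ∃ u, O.dir u v = true

/-- A partial orientation is `q`-connected if every vertex is reachable from `q`
by a (possibly empty) directed path. -/
def QConnected (O : PartialOrientation G) (q : V) : Prop :=
  ∀ v, Relation.ReflTransGen (fun a b => O.dir a b = true) q v

/-- A partial orientation is full if every edge of `G` is oriented. -/
def IsFull (O : PartialOrientation G) : Prop :=
  ∀ u v, G.Adj u v → (O.dir u v = true ∨ O.dir v u = true)

/-- An edge pivot at a vertex `v`: an edge oriented towards `v` becomes unoriented
and a previously unoriented edge incident to `v` becomes oriented towards `v`. -/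
def EdgePivot (O O' : PartialOrientation G) : Prop :=
  ∃ v u w, O.dir u v = true ∧ G.Adj w v ∧ O.dir w v = false ∧ O.dir v w = false ∧
    ∀ a b, (O'.dir a b = true ↔
      ((a = w ∧ b = v) ∨ (O.dir a b = true ∧ ¬(a = u ∧ b = v))))

/-- A cycle reversal: all edges of a consistently oriented (directed) cycle are reversed. -/
def CycleReversal (O O' : PartialOrientation G) : Prop :=
  ∃ (n : ℕ) (σ : Fin (n + 1) → V), Function.Injective σ ∧
    (∀ i : Fin (n + 1), O.dir (σ i) (σ (i + 1)) = true) ∧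
    ∀ a b, (O'.dir a b = true ↔
      ((∃ i : Fin (n + 1), a = σ (i + 1) ∧ b = σ i) ∨
        (O.dir a b = true ∧ ¬ ∃ i : Fin (n + 1), a = σ i ∧ b = σ (i + 1))))

/-- A directed path reversal: all edges of a directed path are reversed. -/
def PathReversal (O O' : PartialOrientation G) : Prop :=
  ∃ (n : ℕ) (σ : Fin (n + 1) → V), Function.Injective σ ∧
    (∀ i : Fin n, O.dir (σ i.castSucc) (σ i.succ) = true) ∧
    ∀ a b, (O'.dir a b = true ↔
      ((∃ i : Fin n, a = σ i.succ ∧ b = σ i.castSucc) ∨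
        (O.dir a b = true ∧ ¬ ∃ i : Fin n, a = σ i.castSucc ∧ b = σ i.succ)))

/-- A cocycle (cut) reversal: all edges of a cut `(S, V∖S)` in which every edge of
the cut is oriented, all towards `S`, are reversed. -/
def CocycleReversal (O O' : PartialOrientation G) : Prop :=
  ∃ S : Set V,
    (∀ u v, G.Adj u v → u ∉ S → v ∈ S → O.dir u v = true) ∧
    ∀ a b, (O'.dir a b = true ↔
      ((a ∈ S ∧ b ∉ S ∧ O.dir b a = true) ∨
        ((a ∈ S ↔ b ∈ S) ∧ O.dir a b = true)))

/-- Equivalence in the generalized cycle reversal system: a finite sequence of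
edge pivots and cycle reversals. -/
def GenCycleEquiv (O O' : PartialOrientation G) : Prop :=
  Relation.ReflTransGen (fun A B => EdgePivot A B ∨ CycleReversal A B) O O'

/-- Equivalence in the generalized cocycle reversal system: a finite sequence of
edge pivots and cocycle reversals. -/
def GenCocycleEquiv (O O' : PartialOrientation G) : Prop :=
  Relation.ReflTransGen (fun A B => EdgePivot A B ∨ CocycleReversal A B) O O'

/-- Equivalence in the generalized cycle-cocycle reversal system: a finite sequence
of edge pivots, cycle reversals and cocycle reversals. -/
def GenCycleCocycleEquiv (O O' : PartialOrientation G) : Prop :=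
  Relation.ReflTransGen
    (fun A B => EdgePivot A B ∨ CycleReversal A B ∨ CocycleReversal A B) O O'

/-- Equivalence in the (plain) cocycle reversal system: a finite sequence of
cocycle reversals. -/
def CocycleEquiv (O O' : PartialOrientation G) : Prop :=
  Relation.ReflTransGen (fun A B => CocycleReversal A B) O O'

end PartialOrientation

/-- The degree of a divisor: the total number of chips. -/
def degDiv {V : Type*} [Fintype V] (D : V → ℤ) : ℤ := ∑ v, D v

/-- `deg⁺` of a divisor: the sum of its positive values. -/
def degPlus {V : Type*} [Fintype V] (D : V → ℤ) : ℤ := ∑ v, max (D v) 0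

/-- A divisor is effective if all of its values are nonnegative. -/
def EffectiveDiv {V : Type*} (D : V → ℤ) : Prop := ∀ v, 0 ≤ D v

/-- Linear equivalence of divisors: `D - D'` lies in the ℤ-span of the columns of
the Laplacian, i.e. there is an integral firing vector `f` with
`D - D' = Δ f`. -/
def LinEquiv {V : Type*} [Fintype V] (G : SimpleGraph V) [DecidableRel G.Adj]
    (D D' : V → ℤ) : Prop :=
  ∃ f : V → ℤ, ∀ v, D v - D' v = ∑ u ∈ Finset.univ.filter (fun u => G.Adj v u), (f v - f u)

/-- The Baker–Norine rank of a divisor: one less than the minimal degree of an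
effective divisor `E` such that `D - E` is not linearly equivalent to any
effective divisor.  In particular `divisorRank G D = -1` iff `D` is not linearly
equivalent to an effective divisor. -/
noncomputable def divisorRank {V : Type*} [Fintype V] (G : SimpleGraph V)
    [DecidableRel G.Adj] (D : V → ℤ) : ℤ :=
  ((sInf { n : ℕ | ∃ E : V → ℤ, EffectiveDiv E ∧ degDiv E = (n : ℤ) ∧
      ¬ ∃ E' : V → ℤ, EffectiveDiv E' ∧ LinEquiv G (fun v => D v - E v) E' } : ℕ) : ℤ) - 1

/-- The genus (cyclomatic number) of a graph: `g = |E| - |V| + 1`. -/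
def graphGenus {V : Type*} [Fintype V] [DecidableEq V] (G : SimpleGraph V)
    [DecidableRel G.Adj] : ℤ :=
  (G.edgeFinset.card : ℤ) - (Fintype.card V : ℤ) + 1

/-- The number of edges of the induced subgraph `G[T]`. -/
def inducedEdgeCount {V : Type*} [Fintype V] [DecidableEq V] (G : SimpleGraph V)
    [DecidableRel G.Adj] (T : Finset V) : ℕ :=
  (G.edgeFinset.filter (fun e => e ∈ T.sym2)).card

/-- `χ̄(S, D) = |E| - |E(G[V∖S])| - |S| - deg(D|_S)`. -/
def chiBar {V : Type*} [Fintype V] [DecidableEq V] (G : SimpleGraph V)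
    [DecidableRel G.Adj] (D : V → ℤ) (S : Finset V) : ℤ :=
  (G.edgeFinset.card : ℤ) - (inducedEdgeCount G Sᶜ : ℤ) - (S.card : ℤ) - ∑ v ∈ S, D v

/-- `outdeg_A(v)`: the number of edges joining `v` to vertices outside `A`. -/
def outdegOf {V : Type*} [Fintype V] [DecidableEq V] (G : SimpleGraph V) [DecidableRel G.Adj]
    (A : Finset V) (v : V) : ℕ :=
  (Finset.univ.filter (fun u => G.Adj v u ∧ u ∉ A)).card

/-- A divisor `D` is `q`-reduced if `D(v) ≥ 0` for `v ≠ q` and every nonempty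
set `A ⊆ V ∖ {q}` contains a vertex sent into debt by firing `A`. -/
def QReduced {V : Type*} [Fintype V] [DecidableEq V] (G : SimpleGraph V) [DecidableRel G.Adj]
    (q : V) (D : V → ℤ) : Prop :=
  (∀ v, v ≠ q → 0 ≤ D v) ∧
    ∀ A : Finset V, A.Nonempty → q ∉ A → ∃ v ∈ A, D v - (outdegOf G A v : ℤ) < 0

/-- The canonical divisor `K(v) = deg(v) - 2`. -/
def canonicalDiv {V : Type*} [Fintype V] (G : SimpleGraph V) [DecidableRel G.Adj]
    (v : V) : ℤ :=
  (G.degree v : ℤ) - 2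



section StmtAux
set_option linter.unusedSectionVars false
set_option maxHeartbeats 1000000
variable {V : Type*} [Fintype V] [DecidableEq V] (G : SimpleGraph V) [DecidableRel G.Adj]

def lap (f : V → ℤ) (v : V) : ℤ :=
  ∑ u ∈ Finset.univ.filter (fun u => G.Adj v u), (f v - f u)

lemma adj_swap (F : V → V → ℤ) :
    ∑ v, ∑ u ∈ Finset.univ.filter (fun u => G.Adj v u), F v u
  = ∑ v, ∑ u ∈ Finset.univ.filter (fun u => G.Adj v u), F u v := by
  simp only [Finset.sum_filter]
  rw [Finset.sum_comm]
  exact Finset.sum_congr rfl fun v _ => Finset.sum_congr rfl fun u _ =>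
    if_congr (G.adj_comm u v) rfl rfl

lemma sum_antisym_zero (F : V → V → ℤ) (h : ∀ v u, F v u = - F u v) :
    ∑ v, ∑ u ∈ Finset.univ.filter (fun u => G.Adj v u), F v u = 0 := by
  have h2 := adj_swap G F
  have h3 : ∑ v, ∑ u ∈ Finset.univ.filter (fun u => G.Adj v u), F u v
      = - ∑ v, ∑ u ∈ Finset.univ.filter (fun u => G.Adj v u), F v u := by
    rw [← Finset.sum_neg_distrib]
    exact Finset.sum_congr rfl fun v _ => by
      rw [← Finset.sum_neg_distrib]
      exact Finset.sum_congr rfl fun u _ => h u v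
  rw [h3] at h2; linarith

lemma lap_selfadj (f g : V → ℤ) :
    ∑ v, g v * lap G f v = ∑ v, f v * lap G g v := by
  have h := sum_antisym_zero G (fun v u => f v * g u - g v * f u) (fun v u => by ring)
  have e1 : ∀ v : V, g v * lap G f v - f v * lap G g v
      = ∑ u ∈ Finset.univ.filter (fun u => G.Adj v u), (f v * g u - g v * f u) := by
    intro v; unfold lap
    rw [Finset.mul_sum, Finset.mul_sum, ← Finset.sum_sub_distrib]
    exact Finset.sum_congr rfl fun u _ => by ring
  have e2 : ∑ v, (g v * lap G f v - f v * lap G g v) = 0 := by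
    rw [Finset.sum_congr rfl (fun v _ => e1 v)]; exact h
  rw [Finset.sum_sub_distrib] at e2; linarith

lemma lap_const (c : ℤ) (v : V) : lap G (fun _ => c) v = 0 := by
  simp [lap]

lemma sum_lap (f : V → ℤ) : ∑ v, lap G f v = 0 := by
  have := lap_selfadj G f (fun _ => 1)
  simp only [one_mul, lap_const, mul_zero, Finset.sum_const_zero] at this
  exact this

lemma linEquiv_iff (D D' : V → ℤ) :
    LinEquiv G D D' ↔ ∃ f, ∀ v, D v - D' v = lap G f v := Iff.rfl

lemma linEquiv_refl (D : V → ℤ) : LinEquiv G D D :=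
  ⟨fun _ => 0, fun v => by simp [lap]⟩

lemma linEquiv_symm {D D' : V → ℤ} (h : LinEquiv G D D') : LinEquiv G D' D := by
  obtain ⟨f, hf⟩ := h
  exact ⟨fun v => - f v, fun v => by
    rw [show D' v - D v = -(D v - D' v) by ring, hf v, ← Finset.sum_neg_distrib]
    exact Finset.sum_congr rfl fun u _ => by ring⟩

lemma linEquiv_trans {D D' D'' : V → ℤ} (h : LinEquiv G D D') (h' : LinEquiv G D' D'') :
    LinEquiv G D D'' := by
  obtain ⟨f, hf⟩ := h; obtain ⟨g, hg⟩ := h'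
  exact ⟨fun v => f v + g v, fun v => by
    rw [show D v - D'' v = (D v - D' v) + (D' v - D'' v) by ring, hf v, hg v,
      ← Finset.sum_add_distrib]
    exact Finset.sum_congr rfl fun u _ => by ring⟩

lemma degDiv_eq_of_linEquiv {D D' : V → ℤ} (h : LinEquiv G D D') :
    degDiv D = degDiv D' := by
  obtain ⟨f, hf⟩ := h
  have : ∑ v, (D v - D' v) = 0 := by
    rw [Finset.sum_congr rfl (fun v _ => hf v)]; exact sum_lap G f
  rw [Finset.sum_sub_distrib] at this
  unfold degDiv; linarith


lemma degDiv_sub (D E : V → ℤ) : degDiv (fun v => D v - E v) = degDiv D - degDiv E := by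
  unfold degDiv; rw [Finset.sum_sub_distrib]

lemma rank_eq_neg_one_iff (hG : G.Connected) (D : V → ℤ) :
    divisorRank G D = -1 ↔ ¬ ∃ E, EffectiveDiv E ∧ LinEquiv G D E := by
  haveI : Nonempty V := hG.nonempty
  set S := { n : ℕ | ∃ E : V → ℤ, EffectiveDiv E ∧ degDiv E = (n : ℤ) ∧
      ¬ ∃ E' : V → ℤ, EffectiveDiv E' ∧ LinEquiv G (fun v => D v - E v) E' } with hS
  have hSne : S.Nonempty := by
    obtain ⟨v0⟩ := ‹Nonempty V›
    set n : ℕ := (degDiv D).toNat + 1 with hn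
    refine ⟨n, fun v => if v = v0 then (n : ℤ) else 0, fun v => by positivity, ?_, ?_⟩
    · show degDiv _ = (n : ℤ)
      unfold degDiv
      rw [Finset.sum_ite_eq' Finset.univ v0 (fun _ => (n:ℤ))]
      simp
    · rintro ⟨E', hE', hlin⟩
      have hdeg := degDiv_eq_of_linEquiv G hlin
      rw [degDiv_sub] at hdeg
      have h1 : degDiv (fun v => if v = v0 then (n : ℤ) else 0) = (n : ℤ) := by
        unfold degDiv
        rw [Finset.sum_ite_eq' Finset.univ v0 (fun _ => (n:ℤ))]; simp
      have h2 : 0 ≤ degDiv E' := Finset.sum_nonneg fun v _ => hE' v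
      have h3 : degDiv D < (n : ℤ) := by
        have := Int.self_le_toNat (degDiv D); omega
      omega
  have key : divisorRank G D = -1 ↔ 0 ∈ S := by
    unfold divisorRank
    rw [← hS]
    constructor
    · intro h
      have : sInf S = 0 := by omega
      rcases Nat.sInf_eq_zero.mp this with h0 | h0
      · exact h0
      · exact absurd h0 (Set.nonempty_iff_ne_empty.mp hSne)
    · intro h0
      have : sInf S = 0 := Nat.sInf_eq_zero.mpr (Or.inl h0)
      omega
  rw [key]
  constructor
  · rintro ⟨E, hE, hdeg, hne⟩
    have hE0 : ∀ v, E v = 0 := by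
      intro v
      have := (Finset.sum_eq_zero_iff_of_nonneg (fun v _ => hE v)).mp (by
        simpa [degDiv] using hdeg)
      exact this v (Finset.mem_univ v)
    have : (fun v => D v - E v) = D := funext fun v => by rw [hE0 v]; ring
    rwa [this] at hne
  · intro h
    refine ⟨fun _ => 0, fun _ => le_refl 0, by simp [degDiv], ?_⟩
    simpa using h


lemma acyclic_exists_source (O : PartialOrientation G) (hac : O.Acyclic)
    (S : Finset V) (hS : S.Nonempty) :
    ∃ v ∈ S, ∀ u ∈ S, O.dir u v = false := by
  have ht : IsTrans V (Relation.TransGen fun a b => O.dir a b = true) :=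
    ⟨fun a b c => Relation.TransGen.trans⟩
  have hi : IsIrrefl V (Relation.TransGen fun a b => O.dir a b = true) := ⟨hac⟩
  have hwf : WellFounded (Relation.TransGen fun a b => O.dir a b = true) :=
    @Finite.wellFounded_of_trans_of_irrefl V _ _ ht hi
  obtain ⟨v, hv, hmin⟩ := hwf.has_min ↑S (by exact_mod_cast hS.to_set)
  refine ⟨v, hv, fun u hu => ?_⟩
  by_contra h
  rw [Bool.not_eq_false] at h
  exact hmin u hu (Relation.TransGen.single h)

lemma not_equiv_effective_of_orientation (hG : G.Connected) (D D' : V → ℤ)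
    (O : PartialOrientation G) (hac : O.Acyclic) (hlin : LinEquiv G D D')
    (hle : ∀ v, D' v ≤ O.div v) :
    ¬ ∃ E, EffectiveDiv E ∧ LinEquiv G D E := by
  rintro ⟨E, hE, hDE⟩
  obtain ⟨f, hf⟩ := linEquiv_trans G (linEquiv_symm G hlin) hDE
  haveI : Nonempty V := hG.nonempty
  obtain ⟨b, -, hb⟩ := Finset.exists_max_image Finset.univ f Finset.univ_nonempty
  set M := f b with hM
  set S : Finset V := Finset.univ.filter (fun v => f v = M) with hSdef
  have hSne : S.Nonempty := ⟨b, by simp [hSdef, hM]⟩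
  obtain ⟨v, hvS, hsrc⟩ := acyclic_exists_source G O hac S hSne
  have hfv : f v = M := by simpa [hSdef] using hvS
  have hfle : ∀ u, f u ≤ M := fun u => hb u (Finset.mem_univ u)
  set P : Finset V := Finset.univ.filter (fun u => O.dir u v = true) with hPdef
  have hPsub : P ⊆ Finset.univ.filter (fun u => G.Adj v u) := by
    intro u hu
    simp only [hPdef, Finset.mem_filter, Finset.mem_univ, true_and] at hu ⊢
    exact (G.adj_comm u v).mp (O.adj_of_dir u v hu)
  have hterm : ∀ u ∈ P, (1 : ℤ) ≤ f v - f u := by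
    intro u hu
    simp only [hPdef, Finset.mem_filter, Finset.mem_univ, true_and] at hu
    have huS : u ∉ S := fun huS => by simp [hsrc u huS] at hu
    have : f u ≠ M := fun h => huS (by simp [hSdef, h])
    have := hfle u
    omega
  have hsum : (O.indeg v : ℤ) ≤ ∑ u ∈ Finset.univ.filter (fun u => G.Adj v u), (f v - f u) := by
    calc (O.indeg v : ℤ) = ∑ _u ∈ P, (1 : ℤ) := by simp [PartialOrientation.indeg, hPdef]
    _ ≤ ∑ u ∈ P, (f v - f u) := Finset.sum_le_sum hterm
    _ ≤ ∑ u ∈ Finset.univ.filter (fun u => G.Adj v u), (f v - f u) := by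
        refine Finset.sum_le_sum_of_subset_of_nonneg hPsub fun u _ _ => ?_
        have := hfle u; omega
  have h1 := hf v
  have h2 := hE v
  have h3 := hle v
  unfold PartialOrientation.div at h3
  omega

/-- Invariant for the Dhar-style construction. -/
def DhInv (q : V) (D : V → ℤ) (A : Finset V) (O : PartialOrientation G) : Prop :=
  O.Acyclic ∧ (∀ u v, O.dir u v = true → u ∉ A ∧ v ∉ A ∧ v ≠ q) ∧
    (∀ v, v ∉ A → v ≠ q → D v < O.indeg v)

lemma dhar_step (q : V) (D : V → ℤ) (A : Finset V) (hq : q ∉ A)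
    (O : PartialOrientation G) (hinv : DhInv G q D A O)
    (v : V) (hvA : v ∈ A) (hv : D v < outdegOf G A v) :
    ∃ O' : PartialOrientation G, DhInv G q D (A.erase v) O' := by
  obtain ⟨hac, hedge, hind⟩ := hinv
  set d' : V → V → Bool := fun a b =>
    O.dir a b || (decide (b = v) && decide (a ∉ A) && decide (G.Adj a v)) with hd'
  have hd'_iff : ∀ a b, d' a b = true ↔
      (O.dir a b = true ∨ (b = v ∧ a ∉ A ∧ G.Adj a v)) := by
    intro a b; simp [hd', and_assoc]
  have hv_no_out : ∀ b, d' v b ≠ true := by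
    intro b h
    rcases (hd'_iff v b).mp h with h | ⟨-, h, -⟩
    · exact (hedge v b h).1 hvA
    · exact h hvA
  have hadj' : ∀ a b, d' a b = true → G.Adj a b := by
    intro a b h
    rcases (hd'_iff a b).mp h with h | ⟨hb, -, h⟩
    · exact O.adj_of_dir a b h
    · exact hb ▸ h
  have hnb' : ∀ a b, d' a b = true → d' b a = false := by
    intro a b h
    rw [← Bool.not_eq_true, hd'_iff]
    rcases (hd'_iff a b).mp h with h | ⟨hb, haA, -⟩
    · rintro (h2 | ⟨ha, -, -⟩)
      · exact absurd (O.not_both a b h) (by simp [h2])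
      · exact (hedge a b h).1 (by rw [ha]; exact hvA)
    · rintro (h2 | ⟨ha, hbA, -⟩)
      · exact (hedge b a h2).1 (by rw [hb]; exact hvA)
      · exact haA (by rw [ha]; exact hvA)
  refine ⟨⟨d', hadj', hnb'⟩, ?_, ?_, ?_⟩
  · -- acyclic
    show ∀ w, ¬ Relation.TransGen (fun a b => d' a b = true) w w
    have key : ∀ w w', Relation.TransGen (fun a b => d' a b = true) w w' → w' ≠ v →
        Relation.TransGen (fun a b => O.dir a b = true) w w' := by
      intro w w' h
      induction h with
      | single h =>
        intro hne
        rcases (hd'_iff _ _).mp h with h | ⟨hb, -, -⟩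
        · exact Relation.TransGen.single h
        · exact absurd hb hne
      | @tail b c h1 h2 ih =>
        intro hne
        rcases (hd'_iff _ _).mp h2 with h2' | ⟨hb, -, -⟩
        · have hbv : b ≠ v := by
            rintro rfl
            exact hv_no_out c ((hd'_iff _ _).mpr (Or.inl h2'))
          exact Relation.TransGen.tail (ih hbv) h2'
        · exact absurd hb hne
    intro w hcyc
    by_cases hw : w = v
    · subst hw
      obtain ⟨c, h, -⟩ := Relation.TransGen.head'_iff.mp hcyc
      exact hv_no_out c h
    · exact hac w (key w w hcyc hw)
  · -- edges avoid A.erase v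
    show ∀ a b, d' a b = true → a ∉ A.erase v ∧ b ∉ A.erase v ∧ b ≠ q
    intro a b h
    rcases (hd'_iff a b).mp h with h | ⟨hb, haA, -⟩
    · obtain ⟨h1, h2, h3⟩ := hedge a b h
      exact ⟨fun hm => h1 (Finset.mem_of_mem_erase hm),
             fun hm => h2 (Finset.mem_of_mem_erase hm), h3⟩
    · refine ⟨fun hm => haA (Finset.mem_of_mem_erase hm), fun hm => ?_, ?_⟩
      · rw [hb] at hm; exact (Finset.notMem_erase v A) hm
      · rintro rfl; exact hq (by rw [hb]; exact hvA)
  · -- indegrees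
    show ∀ w, w ∉ A.erase v → w ≠ q →
      D w < ((Finset.univ.filter (fun u => d' u w = true)).card : ℤ)
    intro w hwA hwq
    by_cases hwv : w = v
    · have heq : (Finset.univ.filter (fun u => d' u w = true))
          = Finset.univ.filter (fun u => G.Adj w u ∧ u ∉ A) := by
        ext u
        simp only [Finset.mem_filter, Finset.mem_univ, true_and]
        rw [hd'_iff]
        constructor
        · rintro (h | ⟨-, h1, h2⟩)
          · exact absurd (show w ∈ A by rw [hwv]; exact hvA) (hedge u w h).2.1
          · exact ⟨by rw [hwv]; exact (G.adj_comm u v).mp h2, h1⟩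
        · rintro ⟨h1, h2⟩
          refine Or.inr ⟨hwv, h2, ?_⟩
          rw [← hwv]; exact (G.adj_comm w u).mp h1
      rw [heq]
      have : (Finset.univ.filter (fun u => G.Adj w u ∧ u ∉ A)).card = outdegOf G A w := rfl
      rw [this]
      rw [hwv]; exact hv
    · have hWA : w ∉ A := fun hm => hwA (Finset.mem_erase_of_ne_of_mem hwv hm)
      have heq : (Finset.univ.filter (fun u => d' u w = true))
          = Finset.univ.filter (fun u => O.dir u w = true) := by
        ext u
        simp only [Finset.mem_filter, Finset.mem_univ, true_and]
        rw [hd'_iff]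
        exact ⟨fun h => h.resolve_right (fun h' => hwv h'.1), Or.inl⟩
      rw [heq]
      exact hind w hWA hwq

/-- Main recursion for the Dhar-style construction. -/
lemma dhar_rec (q : V) (D : V → ℤ)
    (hsup : ∀ A : Finset V, A.Nonempty → q ∉ A → ∃ v ∈ A, D v < outdegOf G A v) :
    ∀ A : Finset V, q ∉ A → (∃ O, DhInv G q D A O) → ∃ O, DhInv G q D ∅ O := by
  intro A
  induction A using Finset.strongInduction with
  | _ A ih =>
    intro hqA hO
    rcases A.eq_empty_or_nonempty with rfl | hne
    · exact hO
    · obtain ⟨v, hvA, hv⟩ := hsup A hne hqA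
      obtain ⟨O, hinv⟩ := hO
      obtain ⟨O', hinv'⟩ := dhar_step G q D A hqA O hinv v hvA hv
      exact ih (A.erase v) (Finset.erase_ssubset hvA) (fun hm => hqA (Finset.mem_of_mem_erase hm))
        ⟨O', hinv'⟩

lemma exists_orientation_of_superstable (q : V) (D : V → ℤ) (hq : D q ≤ -1)
    (hsup : ∀ A : Finset V, A.Nonempty → q ∉ A → ∃ v ∈ A, D v < outdegOf G A v) :
    ∃ O : PartialOrientation G, O.Acyclic ∧ ∀ v, D v ≤ O.div v := by
  have base : ∃ O, DhInv G q D (Finset.univ.erase q) O := by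
    refine ⟨⟨fun _ _ => false, fun _ _ h => (Bool.false_ne_true h).elim,
      fun _ _ h => (Bool.false_ne_true h).elim⟩, fun v hcyc => ?_,
      fun u v h => (Bool.false_ne_true h).elim, fun v hv hvq => ?_⟩
    · obtain ⟨c, h, -⟩ := Relation.TransGen.head'_iff.mp hcyc
      exact Bool.false_ne_true h
    · exact absurd (Finset.mem_erase_of_ne_of_mem hvq (Finset.mem_univ v)) hv
  obtain ⟨O, hac, hedge, hind⟩ :=
    dhar_rec G q D hsup (Finset.univ.erase q) (Finset.notMem_erase q _) base
  refine ⟨O, hac, fun v => ?_⟩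
  by_cases hvq : v = q
  · subst hvq
    have : O.indeg v = 0 := by
      unfold PartialOrientation.indeg
      rw [Finset.card_eq_zero, Finset.filter_eq_empty_iff]
      intro u _ h
      exact (hedge u v h).2.2 rfl
    unfold PartialOrientation.div
    rw [this]
    simpa using hq
  · have := hind v (Finset.notMem_empty v) hvq
    unfold PartialOrientation.div
    omega


lemma exists_pred (hG : G.Connected) (q v : V) (h : v ≠ q) :
    ∃ u, G.Adj v u ∧ G.dist q u + 1 = G.dist q v := by
  have hpos : 0 < G.dist q v := hG.pos_dist_of_ne (Ne.symm h)
  obtain ⟨p, hp⟩ := hG.exists_walk_length_eq_dist q v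
  cases hpr : p.reverse with
  | nil => exact absurd rfl h
  | @cons _ u _ hadj p' =>
    refine ⟨u, hadj, ?_⟩
    have hlen : p'.length + 1 = G.dist q v := by
      have := congrArg SimpleGraph.Walk.length hpr
      rw [SimpleGraph.Walk.length_reverse, hp] at this
      simp at this; omega
    have h1 : G.dist q u ≤ G.dist q v - 1 := by
      have hle := SimpleGraph.dist_le p'.reverse
      rw [SimpleGraph.Walk.length_reverse] at hle
      omega
    have h2 : G.dist q v ≤ G.dist q u + 1 := by
      have ht := hG.dist_triangle (u := q) (v := u) (w := v)
      have hd : G.dist u v ≤ 1 := (SimpleGraph.dist_eq_one_iff_adj.mpr hadj.symm).le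
      omega
    omega

/-- The weight function with rapidly decaying powers along distance from `q`. -/
noncomputable def wt (q : V) (M n : ℕ) : V → ℤ := fun v => (M : ℤ) ^ (n - G.dist q v)

lemma wt_nonneg (q : V) (M n : ℕ) (v : V) : 0 ≤ wt G q M n v := by
  unfold wt; positivity

lemma wt_le (q : V) (M n : ℕ) (hM : 1 ≤ M) (v : V) : wt G q M n v ≤ wt G q M n q := by
  unfold wt
  rw [SimpleGraph.dist_self]
  apply pow_le_pow_right₀ (by exact_mod_cast hM)
  omega

lemma lap_wt_le (hG : G.Connected) (q : V) (M n : ℕ)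
    (hn : ∀ v, G.dist q v ≤ n) (hM : 1 ≤ M) (hMdeg : ∀ v, G.degree v < M)
    (v : V) (hv : v ≠ q) :
    lap G (wt G q M n) v ≤ (G.degree v : ℤ) - M := by
  obtain ⟨u₀, hadj₀, hd₀⟩ := exists_pred G hG q v hv
  set N : Finset V := Finset.univ.filter (fun u => G.Adj v u) with hN
  have hu₀N : u₀ ∈ N := by simp [hN, hadj₀]
  have hcardN : N.card = G.degree v := by
    rw [hN, ← SimpleGraph.neighborFinset_eq_filter]; rfl
  set P : ℤ := (M : ℤ) ^ (n - G.dist q v) with hP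
  have hP1 : 1 ≤ P := one_le_pow₀ (by exact_mod_cast hM)
  have hwv : wt G q M n v = P := rfl
  have hwu₀ : wt G q M n u₀ = P * M := by
    unfold wt
    have : n - G.dist q u₀ = (n - G.dist q v) + 1 := by
      have := hn v; omega
    rw [this, pow_succ, hP]
  have hsplit : lap G (wt G q M n) v
      = (wt G q M n v - wt G q M n u₀) + ∑ u ∈ N.erase u₀, (wt G q M n v - wt G q M n u) := by
    unfold lap
    rw [← hN, ← Finset.add_sum_erase N _ hu₀N]
  have hbound : ∑ u ∈ N.erase u₀, (wt G q M n v - wt G q M n u)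
      ≤ ((N.erase u₀).card : ℤ) * P := by
    calc ∑ u ∈ N.erase u₀, (wt G q M n v - wt G q M n u)
        ≤ ∑ _u ∈ N.erase u₀, P := by
          apply Finset.sum_le_sum
          intro u _
          have := wt_nonneg G q M n u
          rw [hwv] at *
          omega
      _ = ((N.erase u₀).card : ℤ) * P := by rw [Finset.sum_const, nsmul_eq_mul]
  have hcard : ((N.erase u₀).card : ℤ) = (G.degree v : ℤ) - 1 := by
    rw [Finset.card_erase_of_mem hu₀N, hcardN]
    have : 1 ≤ G.degree v := by
      rw [← hcardN]
      exact Finset.card_pos.mpr ⟨u₀, hu₀N⟩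
    push_cast [Nat.cast_sub this]; ring
  have hdegM : lap G (wt G q M n) v ≤ ((G.degree v : ℤ) - M) * P := by
    rw [hsplit, hwv, hwu₀]
    rw [hcard, hwv] at hbound
    have hr : P - P * M + ((G.degree v : ℤ) - 1) * P = ((G.degree v : ℤ) - M) * P := by ring
    linarith
  have hdm : (G.degree v : ℤ) - M ≤ 0 := by
    have := hMdeg v; omega
  have h2 : ((G.degree v : ℤ) - M) * P ≤ ((G.degree v : ℤ) - M) * 1 :=
    mul_le_mul_of_nonpos_left (by omega) hdm
  linarith

lemma exists_superstable_rep (hG : G.Connected) (q : V) (D : V → ℤ)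
    (hne : ¬ ∃ E, EffectiveDiv E ∧ LinEquiv G D E) :
    ∃ D', LinEquiv G D D' ∧ D' q ≤ -1 ∧
      ∀ A : Finset V, A.Nonempty → q ∉ A → ∃ v ∈ A, D' v < outdegOf G A v := by
  classical
  set B : ℕ := Finset.univ.sup (fun v => (D v).natAbs) with hB
  set n : ℕ := Finset.univ.sup (G.dist q) with hn
  set Δ : ℕ := Finset.univ.sup (fun v => G.degree v) with hDl
  set M : ℕ := Δ + B + 2 with hM
  set w : V → ℤ := wt G q M n with hw
  have hM1 : 1 ≤ M := by omega
  have hnn : ∀ v, G.dist q v ≤ n := fun v => Finset.le_sup (Finset.mem_univ v)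
  have hlapw : ∀ v, v ≠ q → lap G w v ≤ -(B : ℤ) - 2 := by
    intro v hv
    have hMdeg : ∀ u, G.degree u < M := by
      intro u
      have : G.degree u ≤ Δ :=
        Finset.le_sup (f := fun v => G.degree v) (Finset.mem_univ u)
      omega
    have h1 := lap_wt_le G hG q M n hnn hM1 hMdeg v hv
    have h2 : G.degree v ≤ Δ :=
      Finset.le_sup (f := fun v => G.degree v) (Finset.mem_univ v)
    have h3 : (M : ℤ) = (Δ : ℤ) + B + 2 := by rw [hM]; push_cast; ring
    have h4 : (G.degree v : ℤ) ≤ (Δ : ℤ) := by exact_mod_cast h2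
    have h5 : lap G w v ≤ (G.degree v : ℤ) - M := h1
    omega
  have hDB : ∀ v, -(B : ℤ) ≤ D v := by
    intro v
    have : (D v).natAbs ≤ B := Finset.le_sup (f := fun v => (D v).natAbs) (Finset.mem_univ v)
    omega
  -- the set of weighted degrees of good representatives
  set P : ℤ → Prop := fun k => ∃ D', LinEquiv G D D' ∧ (∀ v, v ≠ q → 0 ≤ D' v) ∧
    k = ∑ v, D' v * w v with hPdef
  have hinh : ∃ k, P k := by
    refine ⟨∑ v, (D v - lap G w v) * w v, fun v => D v - lap G w v,
      ⟨w, fun v => by simp only [lap]; ring⟩, ?_, rfl⟩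
    intro v hv
    show 0 ≤ D v - lap G w v
    have := hlapw v hv
    have := hDB v
    omega
  have hbdd : ∃ b, ∀ k, P k → k ≤ b := by
    refine ⟨degDiv D * w q, ?_⟩
    rintro k ⟨D', hlin, hpos, rfl⟩
    have hsplit : ∑ v, D' v * w v
        = D' q * w q + ∑ v ∈ Finset.univ.erase q, D' v * w v :=
      (Finset.add_sum_erase _ _ (Finset.mem_univ q)).symm
    have hbd : ∑ v ∈ Finset.univ.erase q, D' v * w v
        ≤ ∑ v ∈ Finset.univ.erase q, D' v * w q := by
      apply Finset.sum_le_sum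
      intro v hv
      have hvq : v ≠ q := Finset.ne_of_mem_erase hv
      exact mul_le_mul_of_nonneg_left (wt_le G q M n hM1 v) (hpos v hvq)
    have hdeg : degDiv D' = degDiv D := (degDiv_eq_of_linEquiv G hlin).symm
    have : D' q * w q + ∑ v ∈ Finset.univ.erase q, D' v * w q = degDiv D' * w q := by
      unfold degDiv
      rw [← Finset.sum_mul, ← Finset.add_sum_erase _ _ (Finset.mem_univ q)]
      ring
    rw [hsplit, ← hdeg]
    omega
  obtain ⟨k₀, ⟨D', hlin, hpos, hk₀⟩, hmax⟩ := Int.exists_greatest_of_bdd hbdd hinh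
  have hsup : ∀ A : Finset V, A.Nonempty → q ∉ A → ∃ v ∈ A, D' v < outdegOf G A v := by
    intro A hAne hqA
    by_contra hcon
    push_neg at hcon
    set g : V → ℤ := fun v => if v ∈ A then 1 else 0 with hg
    set D'' : V → ℤ := fun v => D' v - lap G g v with hD''
    have hlapgA : ∀ v ∈ A, lap G g v = outdegOf G A v := by
      intro v hvA
      unfold lap outdegOf
      rw [show (Finset.univ.filter (fun u => G.Adj v u ∧ u ∉ A))
          = (Finset.univ.filter (fun u => G.Adj v u)).filter (fun u => u ∉ A) by
        rw [Finset.filter_filter]]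
      rw [← Finset.sum_boole]
      apply Finset.sum_congr rfl
      intro u _
      simp only [hg, if_pos hvA]
      by_cases h : u ∈ A <;> simp [h]
    have hlapg_nonpos : ∀ v, v ∉ A → lap G g v ≤ 0 := by
      intro v hvA
      apply Finset.sum_nonpos
      intro u _
      simp only [hg, if_neg hvA]
      by_cases h : u ∈ A <;> simp [h]
    have hpos'' : ∀ v, v ≠ q → 0 ≤ D'' v := by
      intro v hv
      by_cases hvA : v ∈ A
      · have := hcon v hvA
        simp only [hD'']
        rw [hlapgA v hvA]
        omega
      · have := hlapg_nonpos v hvA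
        have := hpos v hv
        simp only [hD'']
        omega
    have hlin'' : LinEquiv G D D'' :=
      linEquiv_trans G hlin ⟨g, fun v => by simp [hD'', lap]⟩
    have hgain : k₀ + 1 ≤ ∑ v, D'' v * w v := by
      have e1 : ∑ v, D'' v * w v = ∑ v, D' v * w v - ∑ v, w v * lap G g v := by
        rw [← Finset.sum_sub_distrib]
        apply Finset.sum_congr rfl
        intro v _
        simp only [hD'']; ring
      have e2 : ∑ v, w v * lap G g v = ∑ v, g v * lap G w v := lap_selfadj G g w
      have e3 : ∑ v, g v * lap G w v = ∑ v ∈ A, lap G w v := by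
        rw [Finset.sum_congr rfl (fun v _ =>
          show g v * lap G w v = if v ∈ A then lap G w v else 0 by
            simp only [hg]; by_cases h : v ∈ A <;> simp [h])]
        rw [Finset.sum_ite_mem, Finset.univ_inter]
      have e4 : ∑ v ∈ A, lap G w v ≤ -1 := by
        calc ∑ v ∈ A, lap G w v ≤ ∑ _v ∈ A, (-1 : ℤ) := by
              apply Finset.sum_le_sum
              intro v hvA
              have : v ≠ q := fun h => hqA (h ▸ hvA)
              have := hlapw v this
              omega
        _ = -(A.card : ℤ) := by rw [Finset.sum_const]; push_cast; ring
        _ ≤ -1 := by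
              have := Finset.card_pos.mpr hAne
              omega
      rw [e1, e2, e3, ← hk₀]
      omega
    exact absurd (hmax _ ⟨D'', hlin'', hpos'', rfl⟩) (by omega)
  have hq : D' q ≤ -1 := by
    by_contra h
    push_neg at h
    exact hne ⟨D', fun v => by
      by_cases hv : v = q
      · subst hv; omega
      · exact hpos v hv, hlin⟩
  exact ⟨D', hlin, hq, hsup⟩


end StmtAux

/-- For `deg D ≤ g - 1`, `r(D) = -1` iff `D ~ D'` for some `D'`
dominated by the divisor of an acyclic partial orientation. -/
theorem stmt9 {V : Type*} [Fintype V] [DecidableEq V] (G : SimpleGraph V)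
    [DecidableRel G.Adj] (hG : G.Connected)
    (D : V → ℤ) (hD : degDiv D ≤ graphGenus G - 1) :
    divisorRank G D = -1 ↔
      ∃ (D' : V → ℤ) (O : PartialOrientation G),
        O.Acyclic ∧ LinEquiv G D D' ∧ ∀ v, D' v ≤ O.div v := by
  rw [rank_eq_neg_one_iff G hG D]
  constructor
  · intro h
    haveI : Nonempty V := hG.nonempty
    obtain ⟨q⟩ := ‹Nonempty V›
    obtain ⟨D', hlin, hq, hsup⟩ := exists_superstable_rep G hG q D h
    obtain ⟨O, hac, hle⟩ := exists_orientation_of_superstable G q D' hq hsup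
    exact ⟨D', O, hac, hlin, hle⟩
  · rintro ⟨D', O, hac, hlin, hle⟩
    exact not_equiv_effective_of_orientation G hG D D' O hac hlin hle
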